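/- arXiv:0707.1515 — 7 statements merged into one kernel-verified Lean document; each statement's English description precedes it below -/
import Mathlib

section
/- Let d ≥ 1, let l ≤ h be real numbers, let φ_0, φ_1, φ_2, … be real-valued functions on ℝ, and let H : ℕ → ℝ. Assume that for every degree k and every vector-valued univariate combination g(t) = Σ_{i=0}^{k} b_i φ_i(t) with b_i ∈ ℝ^d one has ‖b_i‖ ≤ H(k) · sup_{l ≤ t ≤ h} ‖g(t)‖ for every i = 0,…,k. Then for every bivariate combination f(u,v) = Σ_{i=0}^{m} Σ_{j=0}^{n} c_{ij} φ_i(u) φ_j(v) with c_{ij} ∈ ℝ^d, one has ‖c_{ij}‖ ≤ H(m) · H(n) · sup_{l ≤ u,v ≤ h} ‖f(u,v)‖ for every i = 0,…,m and j = 0,…,n. -/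
/-!
Write `f(u, v) = ∑ⱼ φⱼ(v) gⱼ(u)` with `gⱼ(u) = ∑ᵢ φᵢ(u) cᵢⱼ`. For fixed `u`, the univariate bound
in `v` gives `‖gⱼ(u)‖ ≤ H(n) sup ‖f‖`; the univariate bound in `u`, applied to `gⱼ`, then gives
`‖cᵢⱼ‖ ≤ H(m) sup ‖gⱼ‖ ≤ H(m) H(n) sup ‖f‖`. The real work is in the junk value `0` of an
unbounded real supremum: the hypothesis itself forces every `φᵢ`, hence every `f`, to be bounded.
-/

open Finset

def CoeffBounded {𝕜 T : Type*} [NormedField 𝕜] (φ : ℕ → T → 𝕜) (H : ℕ → ℝ) (E : Type*)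
    [NormedAddCommGroup E] [NormedSpace 𝕜 E] : Prop :=
  ∀ (k : ℕ) (b : ℕ → E) (i : ℕ), i ≤ k →
    ‖b i‖ ≤ H k * ⨆ t, ‖∑ i' ∈ range (k + 1), φ i' t • b i'‖

variable {𝕜 T E : Type*} [NormedField 𝕜] [NormedAddCommGroup E] [NormedSpace 𝕜 E]

theorem sum_sum_mul_smul_eq_sum_smul_sum {ι κ : Type*} (s : Finset ι) (t : Finset κ)
    (a : ι → 𝕜) (b : κ → 𝕜) (c : ι → κ → E) :
    ∑ i ∈ s, ∑ j ∈ t, (a i * b j) • c i j = ∑ j ∈ t, b j • ∑ i ∈ s, a i • c i j := by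
  rw [sum_comm]
  simp only [smul_sum, smul_smul, mul_comm]

theorem bddAbove_norm_sum_smul {ι S : Type*} (s : Finset ι) {a : ι → T → 𝕜} {g : ι → S → E}
    (ha : ∀ j, BddAbove (Set.range fun t => ‖a j t‖))
    (hg : ∀ j, BddAbove (Set.range fun x => ‖g j x‖)) :
    BddAbove (Set.range fun p : S × T => ‖∑ j ∈ s, a j p.2 • g j p.1‖) := by
  choose A hA using ha
  choose G hG using hg
  refine ⟨∑ j ∈ s, A j * G j, ?_⟩
  rintro _ ⟨⟨x, t⟩, rfl⟩
  refine (norm_sum_le _ _).trans (sum_le_sum fun j _ => ?_)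
  rw [norm_smul]
  exact mul_le_mul (hA j ⟨t, rfl⟩) (hG j ⟨x, rfl⟩) (norm_nonneg _)
    ((norm_nonneg _).trans (hA j ⟨t, rfl⟩))

namespace CoeffBounded

variable {φ : ℕ → T → 𝕜} {H : ℕ → ℝ}

/-- An unbounded combination would have supremum `0`, forcing all its coefficients to vanish. -/
theorem bddAbove_norm_sum (hφ : CoeffBounded φ H E) (k : ℕ) (b : ℕ → E) :
    BddAbove (Set.range fun t => ‖∑ i ∈ range (k + 1), φ i t • b i‖) := by
  by_contra hB
  have hb : ∀ i ∈ range (k + 1), b i = 0 := fun i hi => by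
    simpa [Real.iSup_of_not_bddAbove hB] using hφ k b i (Nat.lt_succ_iff.mp (mem_range.mp hi))
  refine hB ⟨0, ?_⟩
  rintro _ ⟨t, rfl⟩
  dsimp only
  rw [sum_eq_zero fun i hi => by rw [hb i hi, smul_zero], norm_zero]

theorem nonneg [Nontrivial E] (hφ : CoeffBounded φ H E) (k : ℕ) : 0 ≤ H k := by
  obtain ⟨x, hx⟩ := exists_ne (0 : E)
  have hle := hφ k (fun _ => x) 0 k.zero_le
  exact (pos_of_mul_pos_left ((norm_pos_iff.mpr hx).trans_le hle)
    (Real.iSup_nonneg fun _ => norm_nonneg _)).le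

theorem bddAbove_norm [Nontrivial E] (hφ : CoeffBounded φ H E) (i : ℕ) :
    BddAbove (Set.range fun t => ‖φ i t‖) := by
  obtain ⟨x, hx⟩ := exists_ne (0 : E)
  obtain ⟨C, hC⟩ := hφ.bddAbove_norm_sum i fun i' => if i' = i then x else 0
  refine ⟨C / ‖x‖, ?_⟩
  rintro _ ⟨t, rfl⟩
  rw [le_div_iff₀ (norm_pos_iff.mpr hx), ← norm_smul]
  simpa using hC ⟨t, rfl⟩

theorem norm_le_mul_mul_iSup [Nontrivial E] (hφ : CoeffBounded φ H E) (m n : ℕ)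
    (c : ℕ → ℕ → E) {i j : ℕ} (hi : i ≤ m) (hj : j ≤ n) :
    ‖c i j‖ ≤ H m * H n * ⨆ p : T × T, ‖∑ i' ∈ range (m + 1), ∑ j' ∈ range (n + 1),
      (φ i' p.1 * φ j' p.2) • c i' j'‖ := by
  set S := ⨆ p : T × T, ‖∑ i' ∈ range (m + 1), ∑ j' ∈ range (n + 1),
    (φ i' p.1 * φ j' p.2) • c i' j'‖
  have hS : 0 ≤ S := Real.iSup_nonneg fun _ => norm_nonneg _
  have hbdd : BddAbove (Set.range fun p : T × T => ‖∑ i' ∈ range (m + 1),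
      ∑ j' ∈ range (n + 1), (φ i' p.1 * φ j' p.2) • c i' j'‖) := by
    simp only [sum_sum_mul_smul_eq_sum_smul_sum]
    exact bddAbove_norm_sum_smul (g := fun j' u => ∑ i' ∈ range (m + 1), φ i' u • c i' j') _
      hφ.bddAbove_norm fun j' => hφ.bddAbove_norm_sum m (c · j')
  have hf : ∀ u v, ‖∑ j' ∈ range (n + 1), φ j' v • ∑ i' ∈ range (m + 1), φ i' u • c i' j'‖ ≤ S :=
    fun u v => by
      rw [← sum_sum_mul_smul_eq_sum_smul_sum]
      exact le_ciSup hbdd (u, v)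
  have hg : ∀ u, ‖∑ i' ∈ range (m + 1), φ i' u • c i' j‖ ≤ H n * S := fun u =>
    (hφ n (fun j' => ∑ i' ∈ range (m + 1), φ i' u • c i' j') j hj).trans
      (mul_le_mul_of_nonneg_left (Real.iSup_le (hf u) hS) (hφ.nonneg n))
  calc ‖c i j‖ ≤ H m * ⨆ u, ‖∑ i' ∈ range (m + 1), φ i' u • c i' j‖ := hφ m (c · j) i hi
    _ ≤ H m * (H n * S) :=
      mul_le_mul_of_nonneg_left (Real.iSup_le hg (mul_nonneg (hφ.nonneg n) hS)) (hφ.nonneg m)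
    _ = H m * H n * S := (mul_assoc _ _ _).symm

end CoeffBounded

theorem stmt_0_general (d : ℕ) (hd : 1 ≤ d) (l h : ℝ)
    (φ : ℕ → ℝ → ℝ) (H : ℕ → ℝ)
    (hyp : ∀ (k : ℕ) (b : ℕ → Fin d → ℝ) (i : ℕ), i ≤ k →
      ‖b i‖ ≤ H k * ⨆ t : Set.Icc l h,
        ‖∑ i' ∈ Finset.range (k + 1), φ i' (t : ℝ) • b i'‖) :
    ∀ (m n : ℕ) (c : ℕ → ℕ → Fin d → ℝ) (i j : ℕ), i ≤ m → j ≤ n →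
      ‖c i j‖ ≤ H m * H n * ⨆ uv : Set.Icc l h × Set.Icc l h,
        ‖∑ i' ∈ Finset.range (m + 1), ∑ j' ∈ Finset.range (n + 1),
          (φ i' (uv.1 : ℝ) * φ j' (uv.2 : ℝ)) • c i' j'‖ := by
  have : Nonempty (Fin d) := ⟨⟨0, hd⟩⟩
  intro m n c i j hi hj
  exact CoeffBounded.norm_le_mul_mul_iSup (φ := fun i (t : Set.Icc l h) => φ i t) hyp m n c hi hj

/-- If for every degree `k` the coefficients of any univariate
combination `g(t) = ∑_{i=0}^k b i • φ i t` are bounded by `H k` times the sup of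
`‖g‖` over `[l, h]`, then the coefficients of any bivariate combination
`f(u,v) = ∑_{i=0}^m ∑_{j=0}^n c i j • φ i u * φ j v` are bounded by
`H m * H n` times the sup of `‖f‖` over `[l, h]²`.  Norms are sup norms on `ℝ^d`. -/
theorem stmt_0 (d : ℕ) (hd : 1 ≤ d) (l h : ℝ) (hlh : l ≤ h)
    (φ : ℕ → ℝ → ℝ) (H : ℕ → ℝ)
    (hyp : ∀ (k : ℕ) (b : ℕ → Fin d → ℝ) (i : ℕ), i ≤ k →
      ‖b i‖ ≤ H k * ⨆ t : Set.Icc l h,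
        ‖∑ i' ∈ Finset.range (k + 1), φ i' (t : ℝ) • b i'‖) :
    ∀ (m n : ℕ) (c : ℕ → ℕ → Fin d → ℝ) (i j : ℕ), i ≤ m → j ≤ n →
      ‖c i j‖ ≤ H m * H n * ⨆ uv : Set.Icc l h × Set.Icc l h,
        ‖∑ i' ∈ Finset.range (m + 1), ∑ j' ∈ Finset.range (n + 1),
          (φ i' (uv.1 : ℝ) * φ j' (uv.2 : ℝ)) • c i' j'‖ :=
  stmt_0_general d hd l h φ H hyp
end

section
/- Let d ≥ 1 and let f(t) = Σ_{i=0}^{n} c_i Z_{i,n}(t) with coefficients c_i ∈ ℝ^d. Then for every i = 0,…,n, ‖c_i‖ ≤ ξ_B(n) · max_{0 ≤ t ≤ 1} ‖f(t)‖. -/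
open Finset

/-- The Bernstein basis polynomial `Z_{k,n}(t) = C(n,k) (1-t)^{n-k} t^k` as a real function. -/
noncomputable def Z (n k : ℕ) (t : ℝ) : ℝ := (n.choose k : ℝ) * (1 - t) ^ (n - k) * t ^ k

/-- `ξ_B(n) = ∑_{i=0}^n ∏_{j=0,…,n; j ≠ i} max(|n-j|,|j|)/|i-j|`. -/
noncomputable def xiB (n : ℕ) : ℝ :=
  ∑ i ∈ Finset.range (n + 1), ∏ j ∈ (Finset.range (n + 1)).erase i,
    max |(n : ℝ) - (j : ℝ)| |(j : ℝ)| / |(i : ℝ) - (j : ℝ)|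

/-!
The Lagrange basis polynomial `L_j` at the nodes `m / n` is the product over `m ≠ j` of the linear
factors `(t - m/n) / (j/n - m/n) = t · (n - m)/(j - m) + (1 - t) · (-m)/(j - m)`. Expanding this
product in the Bernstein basis, each coefficient is an average of `C(n, i)` products whose factors
are bounded by `max(|n - m|, |m|) / |j - m|`. Interpolating `Z_{k,n}` at the nodes and comparing
Bernstein coefficients shows that `c_i = ∑_j β_{ij} f(j/n)`, where `β_{ij}` is the `i`-th Bernstein
coefficient of `L_j`; summing the bounds over `j` gives `ξ_B(n)`.
-/

open Polynomial

theorem Lagrange.basisDivisor_eq_C_mul_X_add_C_mul_one_sub_X {F : Type*} [Field F] (x y : F) :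
    Lagrange.basisDivisor x y =
      C ((x - y)⁻¹ * (1 - y)) * X + C ((x - y)⁻¹ * -y) * (1 - X) := by
  simp only [Lagrange.basisDivisor, map_mul, map_sub, map_neg, map_one]
  ring

theorem prod_C_mul_X_add_C_mul_one_sub_X {ι R : Type*} [CommRing R] [DecidableEq ι]
    (s : Finset ι) (a b : ι → R) :
    ∏ m ∈ s, (C (a m) * X + C (b m) * (1 - X)) =
      ∑ i ∈ range (#s + 1),
        C (∑ T ∈ powersetCard i s, (∏ m ∈ T, a m) * ∏ m ∈ s \ T, b m) *
          (X ^ i * (1 - X) ^ (#s - i)) := by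
  rw [prod_add, sum_powerset]
  refine sum_congr rfl fun i _ => ?_
  rw [map_sum, sum_mul]
  refine sum_congr rfl fun T hT => ?_
  obtain ⟨hTs, rfl⟩ := mem_powersetCard.mp hT
  simp only [prod_mul_distrib, prod_const, card_sdiff_of_subset hTs, map_mul, map_prod]
  ring

theorem abs_sum_powersetCard_prod_le {ι R : Type*} [CommRing R] [LinearOrder R]
    [IsStrictOrderedRing R] [DecidableEq ι] (s : Finset ι) (i : ℕ) {a b c : ι → R}
    (ha : ∀ m ∈ s, |a m| ≤ c m) (hb : ∀ m ∈ s, |b m| ≤ c m) :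
    |∑ T ∈ powersetCard i s, (∏ m ∈ T, a m) * ∏ m ∈ s \ T, b m| ≤
      (#s).choose i * ∏ m ∈ s, c m := by
  have hc : ∀ m ∈ s, 0 ≤ c m := fun m hm => (abs_nonneg _).trans (ha m hm)
  calc |∑ T ∈ powersetCard i s, (∏ m ∈ T, a m) * ∏ m ∈ s \ T, b m|
      ≤ ∑ T ∈ powersetCard i s, ∏ m ∈ s, c m := by
        refine (abs_sum_le_sum_abs _ _).trans (sum_le_sum fun T hT => ?_)
        have hTs := (mem_powersetCard.mp hT).1
        rw [abs_mul, abs_prod, abs_prod, ← prod_sdiff hTs, mul_comm]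
        gcongr with m hm m hm
        · exact prod_nonneg fun m hm => hc m (sdiff_subset hm)
        · exact hb m (sdiff_subset hm)
        · exact ha m (hTs hm)
    _ = (#s).choose i * ∏ m ∈ s, c m := by
        rw [sum_const, card_powersetCard, nsmul_eq_mul]

namespace bernsteinPolynomial

variable {R : Type*} [CommRing R]

theorem coeff_of_lt {n ν k : ℕ} (h : k < ν) : (bernsteinPolynomial R n ν).coeff k = 0 := by
  rw [bernsteinPolynomial, mul_right_comm, coeff_mul_X_pow', if_neg (Nat.not_le.mpr h)]

theorem coeff_self (n ν : ℕ) : (bernsteinPolynomial R n ν).coeff ν = n.choose ν := by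
  rw [bernsteinPolynomial, mul_right_comm, coeff_mul_X_pow', if_pos le_rfl, Nat.sub_self,
    coeff_zero_eq_eval_zero]
  simp

theorem natDegree_le {n ν : ℕ} (h : ν ≤ n) : (bernsteinPolynomial R n ν).natDegree ≤ n := by
  unfold bernsteinPolynomial
  compute_degree
  omega

variable [IsDomain R] [CharZero R]

theorem eq_zero_of_sum_C_mul_eq_zero {n : ℕ} {x : ℕ → R}
    (h : ∑ ν ∈ range (n + 1), C (x ν) * bernsteinPolynomial R n ν = 0) : ∀ k ≤ n, x k = 0 := by
  intro k
  induction k using Nat.strong_induction_on with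
  | _ k ih =>
    intro hk
    have hcoeff := congrArg (coeff · k) h
    simp only [finsetSum_coeff, coeff_C_mul, coeff_zero] at hcoeff
    rw [sum_eq_single_of_mem k (mem_range_succ_iff.mpr hk) fun ν _ hν => ?_, coeff_self]
      at hcoeff
    · exact (mul_eq_zero.mp hcoeff).resolve_right (by exact_mod_cast (Nat.choose_pos hk).ne')
    · rcases hν.lt_or_gt with hlt | hgt
      · rw [ih ν hlt (by omega), zero_mul]
      · rw [coeff_of_lt hgt, mul_zero]

theorem coeff_eq_of_sum_C_mul_eq {n : ℕ} {x y : ℕ → R}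
    (h : ∑ ν ∈ range (n + 1), C (x ν) * bernsteinPolynomial R n ν =
      ∑ ν ∈ range (n + 1), C (y ν) * bernsteinPolynomial R n ν) :
    ∀ k ≤ n, x k = y k := by
  have h0 : ∑ ν ∈ range (n + 1), C (x ν - y ν) * bernsteinPolynomial R n ν = 0 := by
    simp only [map_sub, sub_mul, sum_sub_distrib, h, sub_self]
  exact fun k hk => sub_eq_zero.mp (eq_zero_of_sum_C_mul_eq_zero h0 k hk)

end bernsteinPolynomial

noncomputable def lagrangeBernsteinBound {ι : Type*} [DecidableEq ι] (s : Finset ι)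
    (v : ι → ℝ) (j : ι) : ℝ :=
  ∏ m ∈ s.erase j, max |1 - v m| |v m| / |v j - v m|

theorem lagrangeBernsteinBound_nonneg {ι : Type*} [DecidableEq ι] (s : Finset ι) (v : ι → ℝ)
    (j : ι) : 0 ≤ lagrangeBernsteinBound s v j :=
  prod_nonneg fun _ _ => by positivity

theorem Lagrange.exists_basis_eq_sum_bernsteinPolynomial {ι : Type*} [DecidableEq ι]
    {s : Finset ι} {n : ℕ} (hs : #s = n + 1) (v : ι → ℝ) {j : ι} (hj : j ∈ s) :
    ∃ β : ℕ → ℝ,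
      Lagrange.basis s v j = ∑ i ∈ range (n + 1), C (β i) * bernsteinPolynomial ℝ n i ∧
        ∀ i ≤ n, |β i| ≤ lagrangeBernsteinBound s v j := by
  have hE : #(s.erase j) = n := by rw [card_erase_of_mem hj, hs, Nat.add_sub_cancel]
  set a : ι → ℝ := fun m => (v j - v m)⁻¹ * (1 - v m)
  set b : ι → ℝ := fun m => (v j - v m)⁻¹ * -v m
  set S : ℕ → ℝ := fun i =>
    ∑ T ∈ powersetCard i (s.erase j), (∏ m ∈ T, a m) * ∏ m ∈ s.erase j \ T, b m
  refine ⟨fun i => (n.choose i : ℝ)⁻¹ * S i, ?_, fun i hi => ?_⟩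
  · rw [Lagrange.basis, prod_congr rfl fun m _ => basisDivisor_eq_C_mul_X_add_C_mul_one_sub_X _ _,
      prod_C_mul_X_add_C_mul_one_sub_X, hE]
    refine sum_congr rfl fun i hi => ?_
    have hchoose_ne : (n.choose i : ℝ) ≠ 0 := by
      exact_mod_cast (Nat.choose_pos (mem_range_succ_iff.mp hi)).ne'
    have hchoose : C (n.choose i : ℝ)⁻¹ * C (n.choose i : ℝ) = 1 := by
      rw [← map_mul, inv_mul_cancel₀ hchoose_ne, map_one]
    rw [bernsteinPolynomial, ← C_eq_natCast, map_mul]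
    linear_combination (-(C (S i) * (X ^ i * (1 - X) ^ (n - i)))) * hchoose
  · have hpos : (0 : ℝ) < n.choose i := by exact_mod_cast Nat.choose_pos hi
    have hS := abs_sum_powersetCard_prod_le (s.erase j) i (a := a) (b := b)
      (c := fun m => max |1 - v m| |v m| / |v j - v m|)
      (fun m _ => by
        rw [abs_mul, abs_inv, div_eq_mul_inv, mul_comm]
        gcongr
        exact le_max_left _ _)
      (fun m _ => by
        rw [abs_mul, abs_inv, abs_neg, div_eq_mul_inv, mul_comm]
        gcongr
        exact le_max_right _ _)
    rw [hE] at hS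
    rw [abs_mul, abs_inv, abs_of_pos hpos, inv_mul_le_iff₀ hpos]
    exact hS

theorem exists_bernsteinPolynomial_dual {ι : Type*} [DecidableEq ι] {s : Finset ι} {n : ℕ}
    (hs : #s = n + 1) {v : ι → ℝ} (hv : Set.InjOn v s) :
    ∃ β : ℕ → ι → ℝ,
      (∀ i ≤ n, ∀ k ≤ n, ∑ j ∈ s, β i j * (bernsteinPolynomial ℝ n k).eval (v j) =
        if i = k then 1 else 0) ∧
      ∀ i ≤ n, ∀ j ∈ s, |β i j| ≤ lagrangeBernsteinBound s v j := by
  have hbasis : ∀ j, ∃ β : ℕ → ℝ, j ∈ s →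
      Lagrange.basis s v j = ∑ i ∈ range (n + 1), C (β i) * bernsteinPolynomial ℝ n i ∧
        ∀ i ≤ n, |β i| ≤ lagrangeBernsteinBound s v j := fun j => by
    by_cases hj : j ∈ s
    · obtain ⟨β, hβ⟩ := Lagrange.exists_basis_eq_sum_bernsteinPolynomial hs v hj
      exact ⟨β, fun _ => hβ⟩
    · exact ⟨0, fun h => absurd h hj⟩
  choose β hβ using hbasis
  refine ⟨fun i j => β j i, fun i hi k hk => ?_, fun i hi j hj => (hβ j hj).2 i hi⟩
  have hdeg : (bernsteinPolynomial ℝ n k).degree < #s := by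
    rw [hs]
    exact (degree_le_of_natDegree_le (bernsteinPolynomial.natDegree_le hk)).trans_lt
      (by exact_mod_cast n.lt_succ_self)
  have hinterp : bernsteinPolynomial ℝ n k = ∑ i ∈ range (n + 1),
      C (∑ j ∈ s, β j i * (bernsteinPolynomial ℝ n k).eval (v j)) *
        bernsteinPolynomial ℝ n i := by
    conv_lhs => rw [Lagrange.eq_interpolate hv hdeg, Lagrange.interpolate_apply]
    rw [sum_congr rfl fun j hj => by rw [(hβ j hj).1]]
    simp_rw [mul_sum, map_sum, sum_mul, map_mul]
    rw [sum_comm]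
    exact sum_congr rfl fun _ _ => sum_congr rfl fun _ _ => by ring
  have hself : bernsteinPolynomial ℝ n k = ∑ i ∈ range (n + 1),
      C (if i = k then 1 else 0) * bernsteinPolynomial ℝ n i := by
    simp [sum_ite_eq', Nat.lt_succ_of_le hk]
  exact bernsteinPolynomial.coeff_eq_of_sum_C_mul_eq (hinterp.symm.trans hself) i hi

theorem Z_eq_eval_bernsteinPolynomial (n k : ℕ) (t : ℝ) :
    Z n k t = (bernsteinPolynomial ℝ n k).eval t := by
  simp only [Z, bernsteinPolynomial, eval_mul, eval_pow, eval_sub, eval_one, eval_X,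
    eval_natCast]
  ring

theorem injOn_div_natCast (n : ℕ) : Set.InjOn (fun j : ℕ => (j : ℝ) / n) (range (n + 1)) := by
  intro p hp q hq hpq
  rcases eq_or_ne n 0 with rfl | hn
  · simp_all
  · exact_mod_cast (div_left_inj' (Nat.cast_ne_zero.mpr hn)).mp hpq

theorem lagrangeBernsteinBound_div_natCast {n j : ℕ} (hj : j ≤ n) :
    lagrangeBernsteinBound (range (n + 1)) (fun m : ℕ => (m : ℝ) / n) j =
      ∏ m ∈ (range (n + 1)).erase j, max |(n : ℝ) - m| |(m : ℝ)| / |(j : ℝ) - m| := by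
  refine prod_congr rfl fun m hm => ?_
  obtain ⟨hmj, hmn⟩ := mem_erase.mp hm
  have hn : (n : ℝ) ≠ 0 := Nat.cast_ne_zero.mpr (by rw [mem_range] at hmn; omega)
  rw [div_sub_div_same, one_sub_div hn, abs_div, abs_div, abs_div,
    max_div_div_right (abs_nonneg _), div_div_div_cancel_right₀ (abs_ne_zero.mpr hn)]

theorem norm_le_xiB_mul_of_norm_sum_Z_smul_le {E : Type*} [SeminormedAddCommGroup E]
    [NormedSpace ℝ E] {n : ℕ} (c : ℕ → E) {M : ℝ}
    (hM : ∀ t ∈ Set.Icc (0 : ℝ) 1, ‖∑ k ∈ range (n + 1), Z n k t • c k‖ ≤ M)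
    {i : ℕ} (hi : i ≤ n) :
    ‖c i‖ ≤ xiB n * M := by
  obtain ⟨β, hdual, hβ⟩ :=
    exists_bernsteinPolynomial_dual (card_range (n + 1)) (injOn_div_natCast n)
  set f : ℝ → E := fun t => ∑ k ∈ range (n + 1), Z n k t • c k
  have hM0 : 0 ≤ M := (norm_nonneg _).trans (hM 0 ⟨le_rfl, zero_le_one⟩)
  have hnode : ∀ j ∈ range (n + 1), (j : ℝ) / n ∈ Set.Icc (0 : ℝ) 1 := fun j hj =>
    ⟨by positivity,
      div_le_one_of_le₀ (by exact_mod_cast mem_range_succ_iff.mp hj) n.cast_nonneg⟩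
  have hrepr : c i = ∑ j ∈ range (n + 1), β i j • f (j / n) := by
    calc c i = ∑ k ∈ range (n + 1), (if i = k then 1 else 0 : ℝ) • c k := by
          simp [Nat.lt_succ_of_le hi]
      _ = ∑ k ∈ range (n + 1), (∑ j ∈ range (n + 1), β i j * Z n k (j / n)) • c k := by
          refine sum_congr rfl fun k hk => ?_
          simp only [Z_eq_eval_bernsteinPolynomial, hdual i hi k (mem_range_succ_iff.mp hk)]
      _ = ∑ j ∈ range (n + 1), β i j • f (j / n) := by
          simp only [f, smul_sum, sum_smul, mul_smul]
          exact sum_comm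
  calc ‖c i‖ ≤ ∑ j ∈ range (n + 1), |β i j| * ‖f (j / n)‖ := by
        rw [hrepr]
        refine (norm_sum_le _ _).trans_eq (sum_congr rfl fun j _ => ?_)
        rw [norm_smul, Real.norm_eq_abs]
    _ ≤ ∑ j ∈ range (n + 1),
          lagrangeBernsteinBound (range (n + 1)) (fun m : ℕ => (m : ℝ) / n) j * M := by
        gcongr with j hj
        · exact lagrangeBernsteinBound_nonneg _ _ _
        · exact hβ i hi j hj
        · exact hM _ (hnode j hj)
    _ = xiB n * M := by
        rw [← sum_mul, xiB]
        congr 1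
        exact sum_congr rfl fun j hj =>
          lagrangeBernsteinBound_div_natCast (mem_range_succ_iff.mp hj)

theorem stmt_2_general (d : ℕ) (n : ℕ) (c : ℕ → Fin d → ℝ) :
    ∀ i ≤ n, ‖c i‖ ≤ xiB n *
      ⨆ t : Set.Icc (0 : ℝ) 1, ‖∑ i' ∈ Finset.range (n + 1), Z n i' (t : ℝ) • c i'‖ := by
  intro i hi
  have hcont : Continuous fun t : Set.Icc (0 : ℝ) 1 =>
      ‖∑ i' ∈ Finset.range (n + 1), Z n i' (t : ℝ) • c i'‖ := by
    unfold Z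
    fun_prop
  refine norm_le_xiB_mul_of_norm_sum_Z_smul_le c (fun t ht => ?_) hi
  exact le_ciSup (f := fun t : Set.Icc (0 : ℝ) 1 => _) (isCompact_range hcont).bddAbove
    ⟨t, ht⟩

/-- for `f(t) = ∑_{i=0}^n c i • Z_{i,n}(t)` with `c i ∈ ℝ^d` (sup norm),
every coefficient satisfies `‖c i‖ ≤ ξ_B(n) * max_{0 ≤ t ≤ 1} ‖f(t)‖`. -/
theorem stmt_2 (d : ℕ) (hd : 1 ≤ d) (n : ℕ) (c : ℕ → Fin d → ℝ) :
    ∀ i ≤ n, ‖c i‖ ≤ xiB n *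
      ⨆ t : Set.Icc (0 : ℝ) 1, ‖∑ i' ∈ Finset.range (n + 1), Z n i' (t : ℝ) • c i'‖ :=
  stmt_2_general d n c
end

section
/- Let d ≥ 1 and let f(t) = Σ_{i=0}^{n} c_i T_i(t) with coefficients c_i ∈ ℝ^d, where T_i is the i-th Chebyshev polynomial of the first kind. Then for every i = 0,…,n, ‖c_i‖ ≤ √2 · max_{−1 ≤ t ≤ 1} ‖f(t)‖. -/
/-!
Integrate against the Chebyshev weight `dx / √(1 - x²)` on `[-1, 1]` (Mathlib's `measureT`).
By orthogonality, `∫ Tᵢ • f = wᵢ • cᵢ` with `wᵢ = ∫ Tᵢ²`, which is `π` for `i = 0` and `π / 2`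
otherwise. Hence `wᵢ ‖cᵢ‖ ≤ M ∫ |Tᵢ|` with `M = max ‖f‖`, and the pointwise AM-GM bound
`√2 |y| ≤ y² + 1/2` gives `∫ |Tᵢ| ≤ (wᵢ + π / 2) / √2 ≤ √2 wᵢ`.
-/

open Finset Polynomial Polynomial.Chebyshev MeasureTheory Real

lemma sqrt_two_mul_abs_le_sq_add_half (x : ℝ) : √2 * |x| ≤ x ^ 2 + 1 / 2 := by
  have h2 : √2 ^ 2 = 2 := sq_sqrt (by norm_num)
  nlinarith [sq_nonneg (|x| - √2 / 2), sq_abs x]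

lemma ae_mem_Icc_measureT : ∀ᵐ x ∂measureT, x ∈ Set.Icc (-1 : ℝ) 1 := by
  rw [measureT]
  exact ae_restrict_of_forall_mem measurableSet_Ioc fun x hx => Set.Ioc_subset_Icc_self hx

lemma integral_one_measureT : ∫ _, (1 : ℝ) ∂measureT = π := by
  simpa using integral_eval_T_real_measureT_zero

lemma pi_div_two_le_integral_T_real_mul_self_measureT (i : ℕ) :
    π / 2 ≤ ∫ x, (T ℝ i).eval x * (T ℝ i).eval x ∂measureT := by
  rcases eq_or_ne i 0 with rfl | hi
  · rw [Nat.cast_zero, integral_eval_T_real_mul_self_measureT_zero]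
    linarith [pi_pos]
  · rw [integral_T_real_mul_self_measureT_of_ne_zero hi]

lemma integral_abs_eval_T_real_measureT_le (i : ℕ) :
    ∫ x, |(T ℝ i).eval x| ∂measureT ≤
      √2 * ∫ x, (T ℝ i).eval x * (T ℝ i).eval x ∂measureT := by
  set w := ∫ x, (T ℝ i).eval x * (T ℝ i).eval x ∂measureT
  have hw : π / 2 ≤ w := pi_div_two_le_integral_T_real_mul_self_measureT i
  have h2 : √2 * √2 = 2 := mul_self_sqrt (by norm_num)
  have hsq : ∫ x, ((T ℝ i).eval x ^ 2 + 1 / 2) ∂measureT = w + π / 2 := by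
    rw [integral_add (integrable_measureT (by fun_prop)) (integrable_measureT (by fun_prop)),
      integral_const, ← integral_one_measureT, integral_const]
    simp [w, sq, div_eq_mul_inv]
  have hmono : ∫ x, √2 * |(T ℝ i).eval x| ∂measureT ≤
      ∫ x, ((T ℝ i).eval x ^ 2 + 1 / 2) ∂measureT :=
    integral_mono (integrable_measureT (by fun_prop)) (integrable_measureT (by fun_prop))
      fun x => sqrt_two_mul_abs_le_sq_add_half _
  rw [integral_const_mul, hsq] at hmono
  refine le_of_mul_le_mul_left ?_ (sqrt_pos.mpr (show (0 : ℝ) < 2 by norm_num))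
  calc √2 * ∫ x, |(T ℝ i).eval x| ∂measureT ≤ w + π / 2 := hmono
    _ ≤ √2 * √2 * w := by rw [h2]; linarith
    _ = √2 * (√2 * w) := mul_assoc _ _ _

section

variable {E : Type*} [NormedAddCommGroup E] [NormedSpace ℝ E] [CompleteSpace E]

lemma integral_eval_T_real_smul_sum_measureT (s : Finset ℕ) (c : ℕ → E) {i : ℕ} (hi : i ∈ s) :
    ∫ x, (T ℝ i).eval x • ∑ k ∈ s, (T ℝ k).eval x • c k ∂measureT =
      (∫ x, (T ℝ i).eval x * (T ℝ i).eval x ∂measureT) • c i := by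
  simp_rw [Finset.smul_sum, smul_smul]
  rw [integral_finsetSum s fun k _ => (integrable_measureT (by fun_prop)).smul_const (c k)]
  simp_rw [integral_smul_const]
  refine Finset.sum_eq_single_of_mem i hi fun k _ hk => ?_
  rw [integral_eval_T_real_mul_eval_T_real_measureT_of_ne hk.symm, zero_smul]

theorem norm_le_sqrt_two_mul_of_forall_norm_sum_T_smul_le (s : Finset ℕ) (c : ℕ → E) {M : ℝ}
    (hM : ∀ x ∈ Set.Icc (-1 : ℝ) 1, ‖∑ k ∈ s, (T ℝ k).eval x • c k‖ ≤ M) {i : ℕ} (hi : i ∈ s) :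
    ‖c i‖ ≤ √2 * M := by
  set w := ∫ x, (T ℝ i).eval x * (T ℝ i).eval x ∂measureT
  have hw : 0 < w := (by positivity : 0 < π / 2).trans_le
    (pi_div_two_le_integral_T_real_mul_self_measureT i)
  have hM0 : 0 ≤ M := (norm_nonneg _).trans (hM 0 ⟨by norm_num, by norm_num⟩)
  have hcoeff : w * ‖c i‖ ≤ M * ∫ x, |(T ℝ i).eval x| ∂measureT := calc
    w * ‖c i‖ = ‖∫ x, (T ℝ i).eval x • ∑ k ∈ s, (T ℝ k).eval x • c k ∂measureT‖ := by
      rw [integral_eval_T_real_smul_sum_measureT s c hi, norm_smul, Real.norm_of_nonneg hw.le]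
    _ ≤ ∫ x, M * |(T ℝ i).eval x| ∂measureT := by
      refine norm_integral_le_of_norm_le (integrable_measureT (by fun_prop))
        (ae_mem_Icc_measureT.mono fun x hx => ?_)
      rw [norm_smul, Real.norm_eq_abs, mul_comm]
      exact mul_le_mul_of_nonneg_right (hM x hx) (abs_nonneg _)
    _ = M * ∫ x, |(T ℝ i).eval x| ∂measureT := integral_const_mul _ _
  refine le_of_mul_le_mul_left ?_ hw
  calc w * ‖c i‖ ≤ M * ∫ x, |(T ℝ i).eval x| ∂measureT := hcoeff
    _ ≤ M * (√2 * w) := mul_le_mul_of_nonneg_left (integral_abs_eval_T_real_measureT_le i) hM0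
    _ = w * (√2 * M) := by ring

end

theorem stmt_3_general (d : ℕ) (n : ℕ) (c : ℕ → Fin d → ℝ) :
    ∀ i ≤ n, ‖c i‖ ≤ Real.sqrt 2 *
      ⨆ t : Set.Icc (-1 : ℝ) 1,
        ‖∑ i' ∈ Finset.range (n + 1), ((Polynomial.Chebyshev.T ℝ i').eval (t : ℝ)) • c i'‖ := by
  intro i hi
  have hbdd : BddAbove (Set.range fun t : Set.Icc (-1 : ℝ) 1 =>
      ‖∑ i' ∈ Finset.range (n + 1), ((T ℝ i').eval (t : ℝ)) • c i'‖) :=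
    (isCompact_range (by fun_prop)).bddAbove
  exact norm_le_sqrt_two_mul_of_forall_norm_sum_T_smul_le _ c
    (fun x hx => le_ciSup hbdd ⟨x, hx⟩) (mem_range_succ_iff.mpr hi)

/-- for `f(t) = ∑_{i=0}^n c i • T_i(t)` with `c i ∈ ℝ^d` (sup norm),
where `T_i` is the `i`-th Chebyshev polynomial of the first kind, every
coefficient satisfies `‖c i‖ ≤ √2 * max_{-1 ≤ t ≤ 1} ‖f(t)‖`. -/
theorem stmt_3 (d : ℕ) (hd : 1 ≤ d) (n : ℕ) (c : ℕ → Fin d → ℝ) :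
    ∀ i ≤ n, ‖c i‖ ≤ Real.sqrt 2 *
      ⨆ t : Set.Icc (-1 : ℝ) 1,
        ‖∑ i' ∈ Finset.range (n + 1), ((Polynomial.Chebyshev.T ℝ i').eval (t : ℝ)) • c i'‖ :=
  stmt_3_general d n c
end

section
/- Let f be a real univariate polynomial with f(t) = Σ_{i=0}^{n} a_i t^i = Σ_{i=0}^{n} c_i T_i(t), where T_i is the i-th Chebyshev polynomial of the first kind; that is, a_i are the coefficients of f in the power basis and c_i are the coefficients of f in the Chebyshev basis. Then for every i = 0,…,n, |a_i| ≤ ((3^{n+1} − 1)/2) · max_{j=0,…,n} |c_j|. -/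
/-!
Each Chebyshev coefficient contributes `c_j · [t^i] T_j` to `a_i`. From `T_{k+2} = 2 t T_{k+1} - T_k`
every coefficient of `T_k` is bounded by `3^k` in absolute value, since `2 · 3^{k+1} + 3^k ≤ 3^{k+2}`;
summing the geometric series `∑_{j ≤ n} 3^j = (3^{n+1} - 1)/2` gives the bound.
-/

open Finset Polynomial

namespace Polynomial

variable {R : Type*} [CommRing R]

theorem coeff_sum_range_C_mul_X_pow {n i : ℕ} (a : ℕ → R) (hi : i ≤ n) :
    (∑ j ∈ range (n + 1), C (a j) * X ^ j).coeff i = a i := by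
  simp [finsetSum_coeff, Nat.lt_succ_of_le hi]

theorem coeff_sum_C_mul {ι : Type*} (s : Finset ι) (c : ι → R) (p : ι → R[X]) (i : ℕ) :
    (∑ j ∈ s, C (c j) * p j).coeff i = ∑ j ∈ s, c j * (p j).coeff i := by
  simp only [finsetSum_coeff, coeff_C_mul]

section Ordered

variable [LinearOrder R] [IsStrictOrderedRing R]

theorem abs_coeff_X_mul_le {p : R[X]} {B : R} (hB : 0 ≤ B) (hp : ∀ j, |p.coeff j| ≤ B) (i : ℕ) :
    |(X * p).coeff i| ≤ B := by
  cases i with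
  | zero => simpa using hB
  | succ j => simpa [coeff_X_mul] using hp j

theorem Chebyshev.abs_coeff_T_le (k i : ℕ) : |(Chebyshev.T R k).coeff i| ≤ 3 ^ k := by
  induction k using Nat.twoStepInduction generalizing i with
  | zero => by_cases h : i = 0 <;> simp [coeff_one, h]
  | one => simp only [Nat.cast_one, Chebyshev.T_one, coeff_X]; split <;> norm_num
  | more k ih₀ ih₁ =>
    have hrec : (Chebyshev.T R (k + 2 : ℕ)).coeff i =
        2 * (X * Chebyshev.T R (k + 1 : ℕ)).coeff i - (Chebyshev.T R k).coeff i := by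
      rw [show ((k + 2 : ℕ) : ℤ) = k + 2 by push_cast; ring, Chebyshev.T_add_two, coeff_sub,
        mul_assoc, ← C_ofNat, coeff_C_mul]
      push_cast; rfl
    have hX := abs_coeff_X_mul_le (by positivity) ih₁ i
    calc |(Chebyshev.T R (k + 2 : ℕ)).coeff i|
        ≤ 2 * |(X * Chebyshev.T R (k + 1 : ℕ)).coeff i| + |(Chebyshev.T R k).coeff i| := by
          rw [hrec]
          refine (abs_sub _ _).trans ?_
          rw [abs_mul, abs_two]
      _ ≤ 2 * 3 ^ (k + 1) + 3 ^ k := by gcongr; exact ih₀ i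
      _ ≤ 3 ^ (k + 2) := by
          have := pow_nonneg (zero_le_three (α := R)) k
          ring_nf; linarith

end Ordered

end Polynomial

/-- if `∑_{i=0}^n a i * t^i = ∑_{i=0}^n c i * T_i(t)` as real polynomials
(power-basis coefficients `a`, Chebyshev-basis coefficients `c`), then
`|a i| ≤ ((3^{n+1} - 1)/2) * max_j |c j|` for every `i ≤ n`. -/
theorem stmt_4 (n : ℕ) (a c : ℕ → ℝ)
    (hf : ∑ i ∈ Finset.range (n + 1), Polynomial.C (a i) * Polynomial.X ^ i =
      ∑ i ∈ Finset.range (n + 1), Polynomial.C (c i) * Polynomial.Chebyshev.T ℝ i) :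
    ∀ i ≤ n, |a i| ≤ ((3 ^ (n + 1) - 1) / 2 : ℝ) *
      ((Finset.range (n + 1)).sup' Finset.nonempty_range_add_one fun j => |c j|) := by
  intro i hi
  set M := (range (n + 1)).sup' nonempty_range_add_one fun j => |c j|
  have hc : ∀ j ∈ range (n + 1), |c j| ≤ M := fun j hj => le_sup' (fun j => |c j|) hj
  have hM : 0 ≤ M := (abs_nonneg _).trans (hc 0 (by simp))
  have hai : a i = ∑ j ∈ range (n + 1), c j * (Chebyshev.T ℝ j).coeff i := by
    simpa [coeff_sum_range_C_mul_X_pow a hi, coeff_sum_C_mul] using congrArg (coeff · i) hf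
  calc |a i| ≤ ∑ j ∈ range (n + 1), |c j| * |(Chebyshev.T ℝ j).coeff i| := by
        rw [hai]; exact (abs_sum_le_sum_abs _ _).trans_eq (by simp only [abs_mul])
    _ ≤ ∑ j ∈ range (n + 1), M * 3 ^ j :=
        sum_le_sum fun j hj => mul_le_mul (hc j hj) (Chebyshev.abs_coeff_T_le j i) (abs_nonneg _) hM
    _ = ((3 ^ (n + 1) - 1) / 2 : ℝ) * M := by
        rw [← mul_sum, geom_sum_eq (by norm_num : (3 : ℝ) ≠ 1)]; ring
end

section
/- Let d ≥ 1 and let f(t) = Σ_{i=0}^{n} c_i t^i with coefficients c_i ∈ ℝ^d. Then for every i = 0,…,n, ‖c_i‖ ≤ ((3^{n+1} − 1)/√2) · max_{−1 ≤ t ≤ 1} ‖f(t)‖. -/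
/-!
Coordinatewise it suffices to treat a real polynomial `P` of degree at most `n` with `|P| ≤ M`
on `[-1, 1]`. Expand `P = ∑ b k • T k` in Chebyshev polynomials. The `T k` are orthogonal for the
weight `(1 - x²)^(-1/2)` of total mass `π`, and `|T k| ≤ 1` on `[-1, 1]`, so `|b 0| ≤ M` and
`|b k| ≤ 2 M`. The recurrence `T (k + 2) = 2 X T (k + 1) - T k` bounds every coefficient of `T k`
by `3 ^ k / 2` for `k ≥ 1`. Hence every coefficient of `P` is at most `∑ k ≤ n, 3 ^ k M =
(3 ^ (n + 1) - 1) / 2 * M`, and `√2 ≤ 2`.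
-/

open Finset Polynomial Polynomial.Chebyshev MeasureTheory Real

section
variable {K : Type*} [Field K] [NeZero (2 : K)]

lemma natDegree_T_natCast (k : ℕ) : (T K k).natDegree = k := by
  simp [natDegree_T]

lemma coeff_T_natCast_self (k : ℕ) : (T K k).coeff k = 2 ^ (k - 1) := by
  simpa [leadingCoeff, natDegree_T_natCast] using leadingCoeff_T K k

theorem exists_eq_sum_C_mul_T {n : ℕ} {P : K[X]}
    (hP : P.natDegree ≤ n) : ∃ b : ℕ → K, P = ∑ k ∈ range (n + 1), C (b k) * T K k := by
  induction n generalizing P with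
  | zero => exact ⟨fun _ => P.coeff 0, by simpa using eq_C_of_natDegree_le_zero hP⟩
  | succ n ih =>
    set a := P.coeff (n + 1) / 2 ^ n
    obtain ⟨b, hb⟩ : ∃ b : ℕ → K, P - C a * T K (n + 1 : ℕ) =
        ∑ k ∈ range (n + 1), C (b k) * T K k := by
      refine ih (natDegree_le_iff_coeff_eq_zero.2 fun N hN => ?_)
      obtain rfl | hN := eq_or_lt_of_le (Nat.succ_le_of_lt hN)
      · simp only [coeff_sub, coeff_C_mul, coeff_T_natCast_self, a]
        field_simp
        simp
      · rw [coeff_sub, coeff_C_mul, coeff_eq_zero_of_natDegree_lt (hP.trans_lt hN),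
          coeff_eq_zero_of_natDegree_lt (by rwa [natDegree_T_natCast]), mul_zero, sub_zero]
    refine ⟨Function.update b (n + 1) a, ?_⟩
    rw [sum_range_succ, Function.update_self, ← sub_eq_iff_eq_add, hb]
    refine sum_congr rfl fun k hk => ?_
    rw [Function.update_of_ne (by simp at hk; omega)]

end

lemma coeff_two_mul_X_mul {R : Type*} [Semiring R] (p : R[X]) (i : ℕ) :
    (2 * X * p).coeff i = if i = 0 then 0 else 2 * p.coeff (i - 1) := by
  rcases i with _ | i
  · simp [mul_assoc]
  · simp [mul_assoc, coeff_X_mul]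

lemma abs_coeff_T_le : ∀ (k i : ℕ), |(T ℝ k).coeff i| ≤ if k = 0 then 1 else 3 ^ k / 2
  | 0, i => by
    simp only [Nat.cast_zero, T_zero, coeff_one, if_true]
    split_ifs <;> simp
  | 1, i => by
    simp only [Nat.cast_one, T_one, coeff_X, one_ne_zero, if_false]
    split_ifs <;> norm_num
  | k + 2, i => by
    have hk1 := abs_coeff_T_le (k + 1) (i - 1)
    rw [if_neg k.succ_ne_zero] at hk1
    have hk : |(T ℝ k).coeff i| ≤ 3 ^ k := by
      refine (abs_coeff_T_le k i).trans ?_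
      split_ifs with h
      · simp [h]
      · linarith [pow_pos (show (0:ℝ) < 3 by norm_num) k]
    rw [if_neg (by omega), show ((k + 2 : ℕ) : ℤ) = k + 2 by push_cast; rfl, T_add_two,
      coeff_sub, coeff_two_mul_X_mul]
    calc _ ≤ |(if i = 0 then 0 else 2 * (T ℝ (k + 1 : ℕ)).coeff (i - 1))| + |(T ℝ k).coeff i| :=
          abs_sub _ _
      _ ≤ 3 ^ (k + 1) + 3 ^ k := by
          gcongr
          split_ifs
          · simp
          · rw [abs_mul, abs_two]; linarith
      _ ≤ 3 ^ (k + 2) / 2 := by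
          have h3 : (0 : ℝ) < 3 ^ k := by positivity
          rw [pow_succ, pow_succ, pow_succ]; linarith

lemma abs_integral_measureT_le {f : ℝ → ℝ} {M : ℝ} (hf : ∀ x ∈ Set.Icc (-1) 1, |f x| ≤ M) :
    |∫ x, f x ∂measureT| ≤ M * π := by
  rw [integral_measureT_eq_integral_cos]
  simpa [abs_of_pos pi_pos] using intervalIntegral.norm_integral_le_of_norm_le_const
    (a := 0) (b := π) (f := fun θ => f (cos θ))
    fun θ _ => (norm_eq_abs _).trans_le (hf (cos θ) ⟨neg_one_le_cos θ, cos_le_one θ⟩)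

lemma integral_sum_C_mul_T_mul_T {n j : ℕ} (hj : j ≤ n) (b : ℕ → ℝ) :
    ∫ x, (∑ k ∈ range (n + 1), C (b k) * T ℝ k).eval x * (T ℝ j).eval x ∂measureT =
      b j * if j = 0 then π else π / 2 := by
  simp only [eval_finsetSum, eval_mul, eval_C, sum_mul, mul_assoc]
  rw [integral_finsetSum _ fun k _ => (integrable_measureT (by fun_prop)).const_mul _,
    sum_eq_single_of_mem j (mem_range.2 (by omega)) fun k _ hkj => by
      rw [integral_const_mul, integral_eval_T_real_mul_eval_T_real_measureT_of_ne hkj, mul_zero],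
    integral_const_mul]
  split_ifs with h
  · subst h; rw [Nat.cast_zero, integral_eval_T_real_mul_self_measureT_zero]
  · rw [integral_T_real_mul_self_measureT_of_ne_zero h]

lemma abs_le_of_eq_sum_C_mul_T {n j : ℕ} (hj : j ≤ n) {b : ℕ → ℝ} {M : ℝ} {P : ℝ[X]}
    (hP : P = ∑ k ∈ range (n + 1), C (b k) * T ℝ k)
    (hM : ∀ x ∈ Set.Icc (-1) 1, |P.eval x| ≤ M) :
    |b j| ≤ (if j = 0 then 1 else 2) * M := by
  have h := abs_integral_measureT_le (f := fun x => P.eval x * (T ℝ j).eval x) fun x hx => by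
    rw [abs_mul]
    exact (mul_le_of_le_one_right (abs_nonneg _)
      (abs_eval_T_real_le_one j (abs_le.2 hx))).trans (hM x hx)
  rw [hP, integral_sum_C_mul_T_mul_T hj, abs_mul] at h
  split_ifs at h ⊢
  · rw [abs_of_pos pi_pos] at h; nlinarith [pi_pos]
  · rw [abs_of_pos (half_pos pi_pos)] at h; nlinarith [pi_pos]

theorem abs_coeff_le_of_forall_abs_eval_le {n : ℕ} {P : ℝ[X]} {M : ℝ} (hP : P.natDegree ≤ n)
    (hM : ∀ x ∈ Set.Icc (-1) 1, |P.eval x| ≤ M) (i : ℕ) :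
    |P.coeff i| ≤ (3 ^ (n + 1) - 1) / 2 * M := by
  obtain ⟨b, hb⟩ := exists_eq_sum_C_mul_T hP
  have hM0 : 0 ≤ M := (abs_nonneg _).trans (hM 1 ⟨by norm_num, le_rfl⟩)
  have hterm : ∀ k ∈ range (n + 1), |b k * (T ℝ k).coeff i| ≤ 3 ^ k * M := by
    intro k hk
    rw [abs_mul]
    calc _ ≤ ((if k = 0 then 1 else 2) * M) * (if k = 0 then 1 else 3 ^ k / 2) :=
          mul_le_mul (abs_le_of_eq_sum_C_mul_T (by simpa [Nat.lt_succ_iff] using hk) hb hM)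
            (abs_coeff_T_le k i) (abs_nonneg _) (by positivity)
      _ = 3 ^ k * M := by
          split_ifs with h
          · simp [h]
          · ring
  calc |P.coeff i| = |∑ k ∈ range (n + 1), b k * (T ℝ k).coeff i| := by
        simp only [hb, finsetSum_coeff, coeff_C_mul]
    _ ≤ ∑ k ∈ range (n + 1), |b k * (T ℝ k).coeff i| := abs_sum_le_sum_abs _ _
    _ ≤ ∑ k ∈ range (n + 1), 3 ^ k * M := sum_le_sum hterm
    _ = (3 ^ (n + 1) - 1) / 2 * M := by rw [← sum_mul, geom_sum_eq (by norm_num)]; norm_num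

theorem norm_le_of_forall_norm_sum_pow_smul_le {ι : Type*} [Fintype ι] {n : ℕ} {c : ℕ → ι → ℝ}
    {M : ℝ} (hM : ∀ t ∈ Set.Icc (-1 : ℝ) 1, ‖∑ m ∈ range (n + 1), t ^ m • c m‖ ≤ M)
    {i : ℕ} (hi : i ≤ n) : ‖c i‖ ≤ (3 ^ (n + 1) - 1) / 2 * M := by
  have hM0 : 0 ≤ M := (norm_nonneg _).trans (hM 1 ⟨by norm_num, le_rfl⟩)
  have h3 : (1 : ℝ) ≤ 3 ^ (n + 1) := one_le_pow₀ (by norm_num)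
  refine (pi_norm_le_iff_of_nonneg (by nlinarith)).2 fun j => ?_
  set P : ℝ[X] := ∑ m ∈ range (n + 1), C (c m j) * X ^ m
  have hP : P.natDegree ≤ n := natDegree_sum_le_of_forall_le _ _ fun m hm =>
    (natDegree_C_mul_X_pow_le _ _).trans (by simp at hm; omega)
  have hcoeff : P.coeff i = c i j := by
    simp [P, finsetSum_coeff, hi]
  have heval (t : ℝ) : P.eval t = (∑ m ∈ range (n + 1), t ^ m • c m) j := by
    simp only [P, eval_finsetSum, eval_mul, eval_C, eval_pow, eval_X, Finset.sum_apply,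
      Pi.smul_apply, smul_eq_mul, mul_comm]
  rw [norm_eq_abs, ← hcoeff]
  exact abs_coeff_le_of_forall_abs_eval_le hP
    (fun t ht => heval t ▸ (norm_le_pi_norm _ j).trans (hM t ht)) i

theorem stmt_5_general (d : ℕ) (n : ℕ) (c : ℕ → Fin d → ℝ) :
    ∀ i ≤ n, ‖c i‖ ≤ ((3 ^ (n + 1) - 1) / Real.sqrt 2 : ℝ) *
      ⨆ t : Set.Icc (-1 : ℝ) 1,
        ‖∑ i' ∈ Finset.range (n + 1), ((t : ℝ) ^ i') • c i'‖ := by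
  intro i hi
  set M := ⨆ t : Set.Icc (-1 : ℝ) 1, ‖∑ i' ∈ Finset.range (n + 1), ((t : ℝ) ^ i') • c i'‖
  have hbdd : BddAbove (Set.range fun t : Set.Icc (-1 : ℝ) 1 =>
      ‖∑ i' ∈ Finset.range (n + 1), ((t : ℝ) ^ i') • c i'‖) :=
    (isCompact_range (by fun_prop)).bddAbove
  have hM0 : 0 ≤ M := Real.iSup_nonneg fun _ => norm_nonneg _
  have h3 : (1 : ℝ) ≤ 3 ^ (n + 1) := one_le_pow₀ (by norm_num)
  calc ‖c i‖ ≤ (3 ^ (n + 1) - 1) / 2 * M :=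
        norm_le_of_forall_norm_sum_pow_smul_le (fun t ht => le_ciSup hbdd ⟨t, ht⟩) hi
    _ ≤ (3 ^ (n + 1) - 1) / √2 * M := by
        gcongr
        exact Real.sqrt_le_iff.2 ⟨by norm_num, by norm_num⟩

/-- for `f(t) = ∑_{i=0}^n c i • t^i` with `c i ∈ ℝ^d` (sup norm),
every coefficient satisfies `‖c i‖ ≤ ((3^{n+1} - 1)/√2) * max_{-1 ≤ t ≤ 1} ‖f(t)‖`. -/
theorem stmt_5 (d : ℕ) (hd : 1 ≤ d) (n : ℕ) (c : ℕ → Fin d → ℝ) :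
    ∀ i ≤ n, ‖c i‖ ≤ ((3 ^ (n + 1) - 1) / Real.sqrt 2 : ℝ) *
      ⨆ t : Set.Icc (-1 : ℝ) 1,
        ‖∑ i' ∈ Finset.range (n + 1), ((t : ℝ) ^ i') • c i'‖ :=
  stmt_5_general d n c
end

section
/- Let f(u,v) = Σ_{i=0}^{m} Σ_{j=0}^{n} c_{ij} T_i(u) T_j(v) with coefficients c_{ij} ∈ ℝ², where T_i is the i-th Chebyshev polynomial of the first kind, and let P₂ = { c_{00} + Σ_{(i,j): i+j > 0} s_{ij} c_{ij} : −1 ≤ s_{ij} ≤ 1 }. Then for every y ∈ P₂, ‖y‖ ≤ 2(m+1)(n+1) · max_{−1 ≤ u,v ≤ 1} ‖f(u,v)‖. -/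
open Finset Polynomial Real

/-!
Substituting `u = cos θ`, `v = cos φ` turns `f` into a double cosine sum. For real-valued `f`
bounded by `M`, orthogonality of `cos (k θ)` on `[0, π]` (Parseval) gives
`∑ c i j ^ 2 N i N j = ∫∫ f² ≤ π² M²`, where `N 0 = π` and `N k = π / 2` otherwise; hence
`|c 0 0| ≤ M` and `|c i j| ≤ 2 M`. Vector coefficients are reduced to this case by a norming
functional. Every point of `P₂` then has norm at most `M + ((m + 1)(n + 1) - 1) · 2M`.
-/

/-- `∫ θ in 0..π, cos (k * θ) ^ 2`. -/
noncomputable def cosSqIntegral (k : ℕ) : ℝ := if k = 0 then π else π / 2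

lemma pi_div_two_le_cosSqIntegral (k : ℕ) : π / 2 ≤ cosSqIntegral k := by
  unfold cosSqIntegral
  split_ifs <;> linarith [pi_pos]

lemma cosSqIntegral_nonneg (k : ℕ) : 0 ≤ cosSqIntegral k :=
  pi_div_two_pos.le.trans (pi_div_two_le_cosSqIntegral k)

lemma integral_cos_int_mul (k : ℤ) :
    ∫ θ in (0)..π, cos (k * θ) = if k = 0 then π else 0 := by
  split_ifs with hk
  · simp [hk]
  · rw [intervalIntegral.integral_comp_mul_left cos (Int.cast_ne_zero.mpr hk), integral_cos]
    simp [sin_int_mul_pi]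

lemma integral_cos_nat_mul_mul_cos_nat_mul (a b : ℕ) :
    ∫ θ in (0)..π, cos (a * θ) * cos (b * θ) = if a = b then cosSqIntegral a else 0 := by
  have product_to_sum : ∀ θ : ℝ, cos (a * θ) * cos (b * θ)
      = (cos (((a - b : ℤ) : ℝ) * θ) + cos (((a + b : ℤ) : ℝ) * θ)) / 2 := by
    intro θ
    push_cast
    rw [sub_mul, add_mul, cos_sub, cos_add]
    ring
  have hintegrable : ∀ k : ℤ,
      IntervalIntegrable (fun θ : ℝ => cos (k * θ)) MeasureTheory.volume 0 π :=
    fun k => (by fun_prop : Continuous fun θ : ℝ => cos (k * θ)).intervalIntegrable _ _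
  simp_rw [product_to_sum]
  rw [intervalIntegral.integral_div, intervalIntegral.integral_add (hintegrable _) (hintegrable _),
    integral_cos_int_mul, integral_cos_int_mul]
  unfold cosSqIntegral
  by_cases hab : a = b
  · subst hab
    by_cases ha : a = 0 <;> simp [ha]
  · have hsub : (a - b : ℤ) ≠ 0 := by omega
    have hadd : (a + b : ℤ) ≠ 0 := by omega
    simp [hab, hsub, hadd]

lemma integral_sum_mul_cos_sq (s : Finset ℕ) (a : ℕ → ℝ) :
    ∫ θ in (0)..π, (∑ i ∈ s, a i * cos (i * θ)) ^ 2 = ∑ i ∈ s, a i ^ 2 * cosSqIntegral i := by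
  have expand : ∀ θ : ℝ, (∑ i ∈ s, a i * cos (i * θ)) ^ 2
      = ∑ i ∈ s, ∑ k ∈ s, a i * a k * (cos (i * θ) * cos (k * θ)) := by
    intro θ
    simp_rw [sq, sum_mul_sum, mul_mul_mul_comm]
  simp_rw [expand]
  rw [intervalIntegral.integral_finsetSum fun i _ =>
    (by fun_prop : Continuous fun θ : ℝ => ∑ k ∈ s, a i * a k * (cos (i * θ) * cos (k * θ)))
      |>.intervalIntegrable _ _]
  refine sum_congr rfl fun i hi => ?_
  rw [intervalIntegral.integral_finsetSum fun k _ =>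
    (by fun_prop : Continuous fun θ : ℝ => a i * a k * (cos (i * θ) * cos (k * θ)))
      |>.intervalIntegrable _ _]
  simp_rw [intervalIntegral.integral_const_mul, integral_cos_nat_mul_mul_cos_nat_mul,
    mul_ite, mul_zero, sum_ite_eq, if_pos hi]
  ring

lemma integral_zero_pi_le {f : ℝ → ℝ} {C : ℝ} (hf : ∀ θ, |f θ| ≤ C) :
    ∫ θ in (0)..π, f θ ≤ π * C := by
  have h := intervalIntegral.norm_integral_le_of_norm_le_const (a := 0) (b := π)
    fun θ _ => (Real.norm_eq_abs (f θ)).trans_le (hf θ)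
  rw [sub_zero, abs_of_pos pi_pos, Real.norm_eq_abs, mul_comm] at h
  exact (le_abs_self _).trans h

lemma sum_sq_mul_cosSqIntegral_le (s : Finset ℕ) (a : ℕ → ℝ) {M : ℝ}
    (hM : ∀ θ, |∑ i ∈ s, a i * cos (i * θ)| ≤ M) :
    ∑ i ∈ s, a i ^ 2 * cosSqIntegral i ≤ π * M ^ 2 := by
  rw [← integral_sum_mul_cos_sq]
  exact integral_zero_pi_le fun θ => by
    rw [abs_pow]
    exact pow_le_pow_left₀ (abs_nonneg _) (hM θ) 2

lemma sum_sum_sq_mul_cosSqIntegral_le (s t : Finset ℕ) (a : ℕ → ℕ → ℝ) {M : ℝ}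
    (hM : ∀ θ φ, |∑ i ∈ s, ∑ j ∈ t, a i j * (cos (i * θ) * cos (j * φ))| ≤ M) :
    ∑ i ∈ s, ∑ j ∈ t, a i j ^ 2 * (cosSqIntegral i * cosSqIntegral j) ≤ π * (π * M ^ 2) := by
  set b : ℕ → ℝ → ℝ := fun j θ => ∑ i ∈ s, a i j * cos (i * θ) with hb
  have slice : ∀ θ, ∑ j ∈ t, b j θ ^ 2 * cosSqIntegral j ≤ π * M ^ 2 := fun θ =>
    sum_sq_mul_cosSqIntegral_le t (b · θ) fun φ => by
      convert hM θ φ using 2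
      simp only [hb, sum_mul]
      rw [sum_comm]
      exact sum_congr rfl fun i _ => sum_congr rfl fun j _ => by ring
  calc ∑ i ∈ s, ∑ j ∈ t, a i j ^ 2 * (cosSqIntegral i * cosSqIntegral j)
      = ∑ j ∈ t, (∫ θ in (0)..π, b j θ ^ 2) * cosSqIntegral j := by
        simp only [hb, integral_sum_mul_cos_sq, sum_mul]
        rw [sum_comm]
        exact sum_congr rfl fun j _ => sum_congr rfl fun i _ => by ring
    _ = ∫ θ in (0)..π, ∑ j ∈ t, b j θ ^ 2 * cosSqIntegral j := by
        rw [intervalIntegral.integral_finsetSum fun j _ =>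
          (by fun_prop : Continuous fun θ => b j θ ^ 2 * cosSqIntegral j).intervalIntegrable _ _]
        simp_rw [intervalIntegral.integral_mul_const]
    _ ≤ π * (π * M ^ 2) := integral_zero_pi_le fun θ => by
        rw [abs_of_nonneg (sum_nonneg fun j _ => mul_nonneg (sq_nonneg _) (cosSqIntegral_nonneg j))]
        exact slice θ

lemma sq_coeff_mul_cosSqIntegral_le {s t : Finset ℕ} {a : ℕ → ℕ → ℝ} {M : ℝ}
    (hM : ∀ θ φ, |∑ i ∈ s, ∑ j ∈ t, a i j * (cos (i * θ) * cos (j * φ))| ≤ M)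
    {i j : ℕ} (hi : i ∈ s) (hj : j ∈ t) :
    a i j ^ 2 * (cosSqIntegral i * cosSqIntegral j) ≤ π * (π * M ^ 2) := by
  have hterm : ∀ i j, 0 ≤ a i j ^ 2 * (cosSqIntegral i * cosSqIntegral j) := fun i j =>
    mul_nonneg (sq_nonneg _) (mul_nonneg (cosSqIntegral_nonneg i) (cosSqIntegral_nonneg j))
  calc a i j ^ 2 * (cosSqIntegral i * cosSqIntegral j)
      ≤ ∑ j ∈ t, a i j ^ 2 * (cosSqIntegral i * cosSqIntegral j) :=
        single_le_sum (fun j _ => hterm i j) hj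
    _ ≤ ∑ i ∈ s, ∑ j ∈ t, a i j ^ 2 * (cosSqIntegral i * cosSqIntegral j) :=
        single_le_sum (f := fun i => ∑ j ∈ t, a i j ^ 2 * (cosSqIntegral i * cosSqIntegral j))
          (fun i _ => sum_nonneg fun j _ => hterm i j) hi
    _ ≤ π * (π * M ^ 2) := sum_sum_sq_mul_cosSqIntegral_le s t a hM

lemma abs_coeff_le_two_mul {s t : Finset ℕ} {a : ℕ → ℕ → ℝ} {M : ℝ}
    (hM : ∀ θ φ, |∑ i ∈ s, ∑ j ∈ t, a i j * (cos (i * θ) * cos (j * φ))| ≤ M)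
    {i j : ℕ} (hi : i ∈ s) (hj : j ∈ t) : |a i j| ≤ 2 * M := by
  have hM0 : 0 ≤ M := (abs_nonneg _).trans (hM 0 0)
  have h := sq_coeff_mul_cosSqIntegral_le hM hi hj
  have hN : (π / 2) * (π / 2) ≤ cosSqIntegral i * cosSqIntegral j :=
    mul_le_mul (pi_div_two_le_cosSqIntegral i) (pi_div_two_le_cosSqIntegral j)
      pi_div_two_pos.le (cosSqIntegral_nonneg i)
  refine abs_le_of_sq_le_sq (le_of_mul_le_mul_right ?_ (by positivity : 0 < π / 2 * (π / 2)))
    (by linarith)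
  calc a i j ^ 2 * (π / 2 * (π / 2))
      ≤ a i j ^ 2 * (cosSqIntegral i * cosSqIntegral j) :=
        mul_le_mul_of_nonneg_left hN (sq_nonneg _)
    _ ≤ π * (π * M ^ 2) := h
    _ = (2 * M) ^ 2 * (π / 2 * (π / 2)) := by ring

lemma abs_coeff_zero_zero_le {s t : Finset ℕ} {a : ℕ → ℕ → ℝ} {M : ℝ}
    (hM : ∀ θ φ, |∑ i ∈ s, ∑ j ∈ t, a i j * (cos (i * θ) * cos (j * φ))| ≤ M)
    (hs : 0 ∈ s) (ht : 0 ∈ t) : |a 0 0| ≤ M := by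
  have hM0 : 0 ≤ M := (abs_nonneg _).trans (hM 0 0)
  have h := sq_coeff_mul_cosSqIntegral_le hM hs ht
  simp only [cosSqIntegral, if_true] at h
  refine abs_le_of_sq_le_sq (le_of_mul_le_mul_right ?_ (by positivity : 0 < π * π)) hM0
  linarith

section NormedSpace

variable {E : Type*} [NormedAddCommGroup E] [NormedSpace ℝ E]

lemma abs_dual_chebyshev_sum_le {s t : Finset ℕ} {c : ℕ → ℕ → E} {M : ℝ}
    (hf : ∀ u ∈ Set.Icc (-1 : ℝ) 1, ∀ v ∈ Set.Icc (-1 : ℝ) 1,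
      ‖∑ i ∈ s, ∑ j ∈ t, ((Chebyshev.T ℝ i).eval u * (Chebyshev.T ℝ j).eval v) • c i j‖ ≤ M)
    {ℓ : StrongDual ℝ E} (hℓ : ‖ℓ‖ ≤ 1) (θ φ : ℝ) :
    |∑ i ∈ s, ∑ j ∈ t, ℓ (c i j) * (cos (i * θ) * cos (j * φ))| ≤ M := by
  have hℓf : ∑ i ∈ s, ∑ j ∈ t, ℓ (c i j) * (cos (i * θ) * cos (j * φ)) = ℓ (∑ i ∈ s, ∑ j ∈ t,
      ((Chebyshev.T ℝ i).eval (cos θ) * (Chebyshev.T ℝ j).eval (cos φ)) • c i j) := by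
    simp only [map_sum, map_smul, smul_eq_mul, Chebyshev.T_real_cos, Int.cast_natCast, mul_comm]
  rw [hℓf, ← Real.norm_eq_abs]
  calc _ ≤ ‖ℓ‖ * _ := ℓ.le_opNorm _
    _ ≤ 1 * M := mul_le_mul hℓ (hf _ ⟨neg_one_le_cos θ, cos_le_one θ⟩ _
          ⟨neg_one_le_cos φ, cos_le_one φ⟩) (norm_nonneg _) zero_le_one
    _ = M := one_mul M

lemma norm_coeff_le_two_mul {s t : Finset ℕ} {c : ℕ → ℕ → E} {M : ℝ}
    (hf : ∀ u ∈ Set.Icc (-1 : ℝ) 1, ∀ v ∈ Set.Icc (-1 : ℝ) 1,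
      ‖∑ i ∈ s, ∑ j ∈ t, ((Chebyshev.T ℝ i).eval u * (Chebyshev.T ℝ j).eval v) • c i j‖ ≤ M)
    {i j : ℕ} (hi : i ∈ s) (hj : j ∈ t) : ‖c i j‖ ≤ 2 * M := by
  obtain ⟨ℓ, hℓ, hℓc⟩ := exists_dual_vector'' ℝ (c i j)
  have h := abs_coeff_le_two_mul (abs_dual_chebyshev_sum_le hf hℓ) hi hj
  rw [hℓc, RCLike.ofReal_real_eq_id, id, abs_norm] at h
  exact h

lemma norm_coeff_zero_zero_le {s t : Finset ℕ} {c : ℕ → ℕ → E} {M : ℝ}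
    (hf : ∀ u ∈ Set.Icc (-1 : ℝ) 1, ∀ v ∈ Set.Icc (-1 : ℝ) 1,
      ‖∑ i ∈ s, ∑ j ∈ t, ((Chebyshev.T ℝ i).eval u * (Chebyshev.T ℝ j).eval v) • c i j‖ ≤ M)
    (hs : 0 ∈ s) (ht : 0 ∈ t) : ‖c 0 0‖ ≤ M := by
  obtain ⟨ℓ, hℓ, hℓc⟩ := exists_dual_vector'' ℝ (c 0 0)
  have h := abs_coeff_zero_zero_le (abs_dual_chebyshev_sum_le hf hℓ) hs ht
  rw [hℓc, RCLike.ofReal_real_eq_id, id, abs_norm] at h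
  exact h

lemma norm_add_sum_smul_le {ι : Type*} {a : E} {v : ι → E} {r : ι → ℝ} {T : Finset ι} {A B : ℝ}
    (ha : ‖a‖ ≤ A) (hr : ∀ p ∈ T, |r p| ≤ 1) (hv : ∀ p ∈ T, ‖v p‖ ≤ B) :
    ‖a + ∑ p ∈ T, r p • v p‖ ≤ A + #T * B := by
  have hterm : ∀ p ∈ T, ‖r p • v p‖ ≤ B := fun p hp => by
    rw [norm_smul, Real.norm_eq_abs]
    exact (mul_le_of_le_one_left (norm_nonneg _) (hr p hp)).trans (hv p hp)
  calc ‖a + ∑ p ∈ T, r p • v p‖ ≤ ‖a‖ + ∑ p ∈ T, ‖r p • v p‖ := by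
        grw [norm_add_le, norm_sum_le]
    _ ≤ A + #T * B := by
        grw [ha, sum_le_card_nsmul _ _ _ hterm, nsmul_eq_mul]

end NormedSpace

/-- for `f(u,v) = ∑_{i=0}^m ∑_{j=0}^n c i j • T_i(u) T_j(v)` with
`c i j ∈ ℝ²` (sup norm), where `T_i` is the `i`-th Chebyshev polynomial of the first
kind, every point of the bounding polygon
`P₂ = { c 0 0 + ∑_{i+j>0} s i j • c i j : -1 ≤ s i j ≤ 1 }` satisfies
`‖y‖ ≤ 2(m+1)(n+1) * max_{-1 ≤ u,v ≤ 1} ‖f(u,v)‖`. -/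
theorem stmt_8 (m n : ℕ) (c : ℕ → ℕ → Fin 2 → ℝ) :
    ∀ y ∈ {x : Fin 2 → ℝ | ∃ s : ℕ → ℕ → ℝ, (∀ i j, -1 ≤ s i j ∧ s i j ≤ 1) ∧
        x = c 0 0 + ∑ p ∈ (Finset.range (m + 1) ×ˢ Finset.range (n + 1)).filter
          (fun p => 0 < p.1 + p.2), s p.1 p.2 • c p.1 p.2},
      ‖y‖ ≤ (2 * (m + 1 : ℝ) * (n + 1)) *
        ⨆ uv : Set.Icc (-1 : ℝ) 1 × Set.Icc (-1 : ℝ) 1,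
          ‖∑ i ∈ Finset.range (m + 1), ∑ j ∈ Finset.range (n + 1),
            ((Polynomial.Chebyshev.T ℝ i).eval (uv.1 : ℝ) *
              (Polynomial.Chebyshev.T ℝ j).eval (uv.2 : ℝ)) • c i j‖ := by
  rintro y ⟨s, hs, rfl⟩
  set F : Set.Icc (-1 : ℝ) 1 × Set.Icc (-1 : ℝ) 1 → ℝ := fun uv =>
    ‖∑ i ∈ range (m + 1), ∑ j ∈ range (n + 1),
      ((Chebyshev.T ℝ i).eval (uv.1 : ℝ) * (Chebyshev.T ℝ j).eval (uv.2 : ℝ)) • c i j‖ with hF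
  have hbdd : BddAbove (Set.range F) := (isCompact_range (by rw [hF]; fun_prop)).bddAbove
  set M := ⨆ uv, F uv
  have hf : ∀ u ∈ Set.Icc (-1 : ℝ) 1, ∀ v ∈ Set.Icc (-1 : ℝ) 1, ‖∑ i ∈ range (m + 1),
      ∑ j ∈ range (n + 1), ((Chebyshev.T ℝ i).eval u * (Chebyshev.T ℝ j).eval v) • c i j‖ ≤ M :=
    fun u hu v hv => le_ciSup hbdd ⟨⟨u, hu⟩, ⟨v, hv⟩⟩
  set T := (range (m + 1) ×ˢ range (n + 1)).filter fun p => 0 < p.1 + p.2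
  have hT : (#T : ℝ) + 1 ≤ (m + 1) * (n + 1) := by
    have : #T < #(range (m + 1) ×ˢ range (n + 1)) :=
      card_lt_card (filter_ssubset.2 ⟨(0, 0), by simp, by simp⟩)
    rw [card_product, card_range, card_range] at this
    exact_mod_cast this
  have h00 : ‖c 0 0‖ ≤ M := norm_coeff_zero_zero_le hf (by simp) (by simp)
  have hcoeff : ∀ p ∈ T, ‖c p.1 p.2‖ ≤ 2 * M := fun p hp =>
    have ⟨hi, hj⟩ := mem_product.1 (mem_filter.1 hp).1
    norm_coeff_le_two_mul hf hi hj
  calc ‖c 0 0 + ∑ p ∈ T, s p.1 p.2 • c p.1 p.2‖ ≤ M + #T * (2 * M) :=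
        norm_add_sum_smul_le h00 (fun p _ => abs_le.2 (hs p.1 p.2)) hcoeff
    _ ≤ 2 * (m + 1) * (n + 1) * M := by nlinarith [(norm_nonneg _).trans h00]
end

section
/- Let f : ℝ² → ℝ² be a bivariate polynomial map with f(u,v) = Σ_{k=0}^{m} Σ_{l=0}^{n} a_{kl} u^k v^l = Σ_{i=0}^{m} Σ_{j=0}^{n} c_{ij} T_i(u) T_j(v), where a_{kl} ∈ ℝ² are the coefficients of f in the power basis and c_{ij} ∈ ℝ² are the coefficients of f in the Chebyshev basis (T_i being the i-th Chebyshev polynomial of the first kind). Define P₂ᵖ = { a_{00} + Σ_{(k,l): k+l > 0} s_{kl} a_{kl} : −1 ≤ s_{kl} ≤ 1 } and P₂ᶜ = { c_{00} + Σ_{(i,j): i+j > 0} s_{ij} c_{ij} : −1 ≤ s_{ij} ≤ 1 }. Then P₂ᶜ ⊆ P₂ᵖ. -/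
/-!
Every monomial is a convex combination of Chebyshev polynomials: `x ^ k = ∑ i, b k i * T i x`
with `b k i ≥ 0`, by induction on `k` from `x * T 0 = T 1` and `2 x T (i + 1) = T (i + 2) + T i`,
and `∑ i, b k i = 1` by evaluating at `x = 1`. Substituting this into the power form of `f` and
comparing Chebyshev coefficients gives `c i j = ∑ k l, b k i * b l j • a k l`. So a point
`∑ i j, s i j • c i j` of `P₂ᶜ` (with `s 0 0 = 1`) equals `∑ k l, s' k l • a k l` with
`s' k l = ∑ i j, s i j * b k i * b l j ∈ [-1, 1]`, and `s' 0 0 = s 0 0 = 1` since `b 0 i = δ 0 i`.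
-/

open Finset Polynomial

open Polynomial.Chebyshev (T T_add_two T_eval_one chebyshevTsequence)

noncomputable def chebCone (N : ℕ) : PointedCone ℝ ℝ[X] :=
  PointedCone.hull ℝ ((fun i : ℕ => T ℝ i) '' ↑(range (N + 1)))

lemma T_mem_chebCone {N i : ℕ} (hi : i ≤ N) : T ℝ i ∈ chebCone N :=
  PointedCone.subset_hull ⟨i, by simpa [Nat.lt_succ_iff] using hi, rfl⟩

lemma chebCone_mono : Monotone chebCone := fun _ _ h =>
  Submodule.span_mono <| Set.image_mono <| by simpa using h

lemma X_mul_T_mem_chebCone {N i : ℕ} (hi : i ≤ N) : X * T ℝ i ∈ chebCone (N + 1) := by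
  cases i with
  | zero => simpa using T_mem_chebCone (N := N + 1) (i := 1) (by omega)
  | succ i =>
    have h : X * T ℝ (i + 1 : ℕ) =
        (⟨1 / 2, by norm_num⟩ : {c : ℝ // 0 ≤ c}) • (T ℝ (i + 2 : ℕ) + T ℝ i) := by
      rw [Nonneg.mk_smul, smul_eq_C_mul]
      push_cast
      rw [T_add_two, sub_add_cancel, ← mul_assoc, ← mul_assoc, ← C_ofNat, ← C_mul]
      norm_num
    rw [h]
    exact Submodule.smul_mem _ _ (add_mem (T_mem_chebCone (by omega)) (T_mem_chebCone (by omega)))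

lemma X_mul_mem_chebCone {N : ℕ} {p : ℝ[X]} (hp : p ∈ chebCone N) :
    X * p ∈ chebCone (N + 1) := by
  induction hp using Submodule.span_induction with
  | mem q hq =>
    obtain ⟨i, hi, rfl⟩ := hq
    exact X_mul_T_mem_chebCone (by simpa [Nat.lt_succ_iff] using hi)
  | zero => simp
  | add p q _ _ hp hq => rw [mul_add]; exact add_mem hp hq
  | smul c p _ hp => rw [mul_smul_comm]; exact Submodule.smul_mem _ c hp

lemma X_pow_mem_chebCone (k : ℕ) : (X : ℝ[X]) ^ k ∈ chebCone k := by
  induction k with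
  | zero => simpa using T_mem_chebCone (N := 0) (i := 0) le_rfl
  | succ k ih => rw [pow_succ']; exact X_mul_mem_chebCone ih

lemma exists_nonneg_X_pow_eq_sum_smul_T {k N : ℕ} (hk : k ≤ N) :
    ∃ b : ℕ → ℝ, (∀ i, 0 ≤ b i) ∧ (X : ℝ[X]) ^ k = ∑ i ∈ range (N + 1), b i • T ℝ i := by
  obtain ⟨b, hb⟩ := (Submodule.mem_span_image_finset_iff_exists_fun' _).mp
    (chebCone_mono hk (X_pow_mem_chebCone k))
  exact ⟨fun i => b i, fun i => (b i).2, hb.symm⟩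

lemma exists_nonneg_chebCoeffs_X_pow (N : ℕ) : ∃ b : ℕ → ℕ → ℝ, ∀ k ≤ N,
    (∀ i, 0 ≤ b k i) ∧ (X : ℝ[X]) ^ k = ∑ i ∈ range (N + 1), b k i • T ℝ i := by
  have h : ∀ k, ∃ β : ℕ → ℝ, k ≤ N →
      (∀ i, 0 ≤ β i) ∧ (X : ℝ[X]) ^ k = ∑ i ∈ range (N + 1), β i • T ℝ i := fun k => by
    by_cases hk : k ≤ N
    · exact (exists_nonneg_X_pow_eq_sum_smul_T hk).imp fun _ h _ => h
    · exact ⟨0, fun h => absurd h hk⟩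
  choose b hb using h
  exact ⟨b, hb⟩

lemma sum_eq_one_of_X_pow_eq_sum_smul_T {k : ℕ} {s : Finset ℕ} {b : ℕ → ℝ}
    (h : (X : ℝ[X]) ^ k = ∑ i ∈ s, b i • T ℝ i) : ∑ i ∈ s, b i = 1 := by
  simpa [eval_finsetSum, T_eval_one] using (congrArg (eval 1) h).symm

lemma eval_eq_sum_of_X_pow_eq_sum_smul_T {k : ℕ} {s : Finset ℕ} {b : ℕ → ℝ}
    (h : (X : ℝ[X]) ^ k = ∑ i ∈ s, b i • T ℝ i) (u : ℝ) :
    u ^ k = ∑ i ∈ s, b i * (T ℝ i).eval u := by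
  simpa [eval_finsetSum] using congrArg (eval u) h

lemma eq_of_sum_smul_T_eq {N : ℕ} {b b' : ℕ → ℝ}
    (h : ∑ i ∈ range (N + 1), b i • T ℝ i = ∑ i ∈ range (N + 1), b' i • T ℝ i)
    {i : ℕ} (hi : i ≤ N) : b i = b' i := by
  rw [← sub_eq_zero, ← sum_sub_distrib] at h
  simp only [← sub_smul] at h
  exact sub_eq_zero.mp <| linearIndependent_iff'.mp (chebyshevTsequence ℝ).linearIndependent
    _ (fun i => b i - b' i) h i (by simpa [Nat.lt_succ_iff] using hi)

lemma eq_ite_of_one_eq_sum_smul_T {N : ℕ} {b : ℕ → ℝ}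
    (h : (1 : ℝ[X]) = ∑ i ∈ range (N + 1), b i • T ℝ i) {i : ℕ} (hi : i ≤ N) :
    b i = if i = 0 then 1 else 0 := by
  refine eq_of_sum_smul_T_eq (b' := fun i => if i = 0 then 1 else 0) (h.symm.trans ?_) hi
  simp [ite_smul]

def coeffGrid (m n : ℕ) : Finset (ℕ × ℕ) := range (m + 1) ×ˢ range (n + 1)

lemma mem_coeffGrid {m n : ℕ} {p : ℕ × ℕ} : p ∈ coeffGrid m n ↔ p.1 ≤ m ∧ p.2 ≤ n := by
  simp [coeffGrid]

lemma sum_coeffGrid_eq_add_sum_filter {M : Type*} [AddCommMonoid M] (m n : ℕ)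
    (f : ℕ × ℕ → M) :
    ∑ p ∈ coeffGrid m n, f p =
      f (0, 0) + ∑ p ∈ (coeffGrid m n).filter (fun p => 0 < p.1 + p.2), f p := by
  rw [← add_sum_erase _ f (a := (0, 0)) (by simp [mem_coeffGrid])]
  congr 2
  ext p
  simp only [mem_erase, mem_filter, mem_coeffGrid, ne_eq, Prod.ext_iff]
  omega

section VectorSpace

variable {V : Type*} [AddCommGroup V] [Module ℝ V]

lemma eq_zero_of_forall_sum_eval_T_smul_eq_zero {N : ℕ} {d : ℕ → V}
    (h : ∀ u : ℝ, ∑ i ∈ range (N + 1), (T ℝ i).eval u • d i = 0) {i : ℕ} (hi : i ≤ N) :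
    d i = 0 := by
  refine (Module.forall_dual_apply_eq_zero_iff ℝ (d i)).mp fun φ => ?_
  have hpoly : ∑ i ∈ range (N + 1), φ (d i) • T ℝ i = ∑ i ∈ range (N + 1), (0 : ℝ) • T ℝ i :=
    Polynomial.funext fun u => by simpa [eval_finsetSum, mul_comm] using congrArg φ (h u)
  exact eq_of_sum_smul_T_eq hpoly hi

lemma eq_zero_of_forall_sum_sum_eval_T_mul_smul_eq_zero {m n : ℕ} {d : ℕ → ℕ → V}
    (h : ∀ u v : ℝ, ∑ i ∈ range (m + 1), ∑ j ∈ range (n + 1),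
      ((T ℝ i).eval u * (T ℝ j).eval v) • d i j = 0)
    {i j : ℕ} (hi : i ≤ m) (hj : j ≤ n) : d i j = 0 := by
  refine eq_zero_of_forall_sum_eval_T_smul_eq_zero (fun v => ?_) hj
  refine eq_zero_of_forall_sum_eval_T_smul_eq_zero
    (d := fun i => ∑ j ∈ range (n + 1), (T ℝ j).eval v • d i j) (fun u => ?_) hi
  simpa [smul_sum, mul_smul] using h u v

lemma chebCoeff_eq_sum_smul_powCoeff {m n : ℕ} {a c : ℕ → ℕ → V} {b b' : ℕ → ℕ → ℝ}
    (hb : ∀ k ≤ m, (X : ℝ[X]) ^ k = ∑ i ∈ range (m + 1), b k i • T ℝ i)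
    (hb' : ∀ l ≤ n, (X : ℝ[X]) ^ l = ∑ j ∈ range (n + 1), b' l j • T ℝ j)
    (heq : ∀ u v : ℝ,
      ∑ k ∈ range (m + 1), ∑ l ∈ range (n + 1), (u ^ k * v ^ l) • a k l =
        ∑ i ∈ range (m + 1), ∑ j ∈ range (n + 1), ((T ℝ i).eval u * (T ℝ j).eval v) • c i j)
    {i j : ℕ} (hi : i ≤ m) (hj : j ≤ n) :
    c i j = ∑ q ∈ coeffGrid m n, (b q.1 i * b' q.2 j) • a q.1 q.2 := by
  rw [← sub_eq_zero]
  refine eq_zero_of_forall_sum_sum_eval_T_mul_smul_eq_zero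
    (d := fun i j => c i j - ∑ q ∈ coeffGrid m n, (b q.1 i * b' q.2 j) • a q.1 q.2)
    (fun u v => ?_) hi hj
  simp only [smul_sub, sum_sub_distrib, ← heq u v, sub_eq_zero, smul_sum, smul_smul]
  have hpow : ∀ q ∈ coeffGrid m n, u ^ q.1 * v ^ q.2 =
      ∑ i ∈ range (m + 1), ∑ j ∈ range (n + 1),
        (T ℝ i).eval u * (T ℝ j).eval v * (b q.1 i * b' q.2 j) := fun q hq => by
    rw [mem_coeffGrid] at hq
    rw [eval_eq_sum_of_X_pow_eq_sum_smul_T (hb q.1 hq.1) u,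
      eval_eq_sum_of_X_pow_eq_sum_smul_T (hb' q.2 hq.2) v, sum_mul_sum]
    exact sum_congr rfl fun i _ => sum_congr rfl fun j _ => by ring
  rw [← sum_product', ← coeffGrid, sum_congr rfl fun q hq => by rw [hpow q hq, sum_smul]]
  simp only [sum_smul]
  rw [sum_comm]
  exact sum_congr rfl fun _ _ => sum_comm

def boundingPolygon (m n : ℕ) (a : ℕ → ℕ → V) : Set V :=
  {x | ∃ s : ℕ → ℕ → ℝ, (∀ i j, -1 ≤ s i j ∧ s i j ≤ 1) ∧
    x = a 0 0 + ∑ p ∈ (coeffGrid m n).filter (fun p => 0 < p.1 + p.2), s p.1 p.2 • a p.1 p.2}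

lemma mem_boundingPolygon_iff {m n : ℕ} {a : ℕ → ℕ → V} {x : V} :
    x ∈ boundingPolygon m n a ↔ ∃ t : ℕ → ℕ → ℝ, (∀ i j, |t i j| ≤ 1) ∧ t 0 0 = 1 ∧
      x = ∑ p ∈ coeffGrid m n, t p.1 p.2 • a p.1 p.2 := by
  constructor
  · rintro ⟨s, hs, rfl⟩
    refine ⟨fun i j => if i = 0 ∧ j = 0 then 1 else s i j, fun i j => ?_, by simp, ?_⟩
    · dsimp only
      split_ifs
      exacts [by simp, abs_le.mpr (hs i j)]
    · rw [sum_coeffGrid_eq_add_sum_filter]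
      dsimp only
      rw [if_pos ⟨rfl, rfl⟩, one_smul]
      congr 1
      refine sum_congr rfl fun p hp => ?_
      rw [if_neg (by simp only [mem_filter] at hp; omega)]
  · rintro ⟨t, ht, ht0, rfl⟩
    refine ⟨t, fun i j => abs_le.mp (ht i j), ?_⟩
    rw [sum_coeffGrid_eq_add_sum_filter, ht0, one_smul]

theorem boundingPolygon_subset_of_eq_sum_smul {m n : ℕ} {a c : ℕ → ℕ → V}
    {W : ℕ × ℕ → ℕ × ℕ → ℝ}
    (hW : ∀ q ∈ coeffGrid m n, ∀ p ∈ coeffGrid m n, 0 ≤ W q p)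
    (hW_sum : ∀ q ∈ coeffGrid m n, ∑ p ∈ coeffGrid m n, W q p = 1)
    (hW_origin : ∀ p ∈ coeffGrid m n, W (0, 0) p = if p = (0, 0) then 1 else 0)
    (hca : ∀ p ∈ coeffGrid m n, c p.1 p.2 = ∑ q ∈ coeffGrid m n, W q p • a q.1 q.2) :
    boundingPolygon m n c ⊆ boundingPolygon m n a := by
  intro x hx
  obtain ⟨t, ht, ht0, rfl⟩ := mem_boundingPolygon_iff.mp hx
  set s : ℕ → ℕ → ℝ := fun k l =>
    if (k, l) ∈ coeffGrid m n then ∑ p ∈ coeffGrid m n, t p.1 p.2 * W (k, l) p else 0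
  have hs : ∀ k l, (k, l) ∈ coeffGrid m n →
      s k l = ∑ p ∈ coeffGrid m n, t p.1 p.2 * W (k, l) p := fun _ _ hq => if_pos hq
  refine mem_boundingPolygon_iff.mpr ⟨s, fun k l => ?_, ?_, ?_⟩
  · by_cases hq : (k, l) ∈ coeffGrid m n
    · calc |s k l| ≤ ∑ p ∈ coeffGrid m n, W (k, l) p := by
            rw [hs k l hq]
            refine (abs_sum_le_sum_abs _ _).trans (sum_le_sum fun p hp => ?_)
            rw [abs_mul, abs_of_nonneg (hW _ hq p hp)]
            exact mul_le_of_le_one_left (hW _ hq p hp) (ht _ _)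
        _ = 1 := hW_sum _ hq
    · simp [s, hq]
  · have h0 : ((0 : ℕ), (0 : ℕ)) ∈ coeffGrid m n := by simp [mem_coeffGrid]
    rw [hs 0 0 h0, sum_congr rfl fun p hp => by rw [hW_origin p hp, mul_ite, mul_one, mul_zero]]
    simp [h0, ht0]
  · rw [sum_congr rfl fun p hp => by rw [hca p hp, smul_sum], sum_comm]
    refine sum_congr rfl fun q hq => ?_
    rw [hs q.1 q.2 hq, sum_smul]
    simp only [smul_smul]

end VectorSpace

/-- let `f : ℝ² → ℝ²` have power-basis coefficients `a k l ∈ ℝ²` and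
Chebyshev-basis coefficients `c i j ∈ ℝ²`, i.e.
`f(u,v) = ∑_{k,l} a k l • u^k v^l = ∑_{i,j} c i j • T_i(u) T_j(v)`.  Then the
Chebyshev bounding polygon `P₂ᶜ` is contained in the power bounding polygon `P₂ᵖ`. -/
theorem stmt_11 (m n : ℕ) (a c : ℕ → ℕ → Fin 2 → ℝ)
    (heq : ∀ u v : ℝ,
      ∑ k ∈ Finset.range (m + 1), ∑ l ∈ Finset.range (n + 1),
          (u ^ k * v ^ l) • a k l =
        ∑ i ∈ Finset.range (m + 1), ∑ j ∈ Finset.range (n + 1),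
          ((Polynomial.Chebyshev.T ℝ i).eval u * (Polynomial.Chebyshev.T ℝ j).eval v)
            • c i j) :
    {x : Fin 2 → ℝ | ∃ s : ℕ → ℕ → ℝ, (∀ i j, -1 ≤ s i j ∧ s i j ≤ 1) ∧
        x = c 0 0 + ∑ p ∈ (Finset.range (m + 1) ×ˢ Finset.range (n + 1)).filter
          (fun p => 0 < p.1 + p.2), s p.1 p.2 • c p.1 p.2} ⊆
      {x : Fin 2 → ℝ | ∃ s : ℕ → ℕ → ℝ, (∀ k l, -1 ≤ s k l ∧ s k l ≤ 1) ∧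
        x = a 0 0 + ∑ p ∈ (Finset.range (m + 1) ×ˢ Finset.range (n + 1)).filter
          (fun p => 0 < p.1 + p.2), s p.1 p.2 • a p.1 p.2} := by
  obtain ⟨b, hb⟩ := exists_nonneg_chebCoeffs_X_pow m
  obtain ⟨b', hb'⟩ := exists_nonneg_chebCoeffs_X_pow n
  refine boundingPolygon_subset_of_eq_sum_smul (W := fun q p => b q.1 p.1 * b' q.2 p.2)
    ?_ ?_ ?_ ?_ <;> simp only [mem_coeffGrid]
  · rintro q ⟨hk, hl⟩ p -
    exact mul_nonneg ((hb _ hk).1 _) ((hb' _ hl).1 _)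
  · rintro q ⟨hk, hl⟩
    rw [coeffGrid, sum_product' (f := fun i j => b q.1 i * b' q.2 j), ← sum_mul_sum,
      sum_eq_one_of_X_pow_eq_sum_smul_T (hb _ hk).2,
      sum_eq_one_of_X_pow_eq_sum_smul_T (hb' _ hl).2, one_mul]
  · rintro p ⟨hi, hj⟩
    rw [eq_ite_of_one_eq_sum_smul_T (b := b 0) (by simpa using (hb 0 m.zero_le).2) hi,
      eq_ite_of_one_eq_sum_smul_T (b := b' 0) (by simpa using (hb' 0 n.zero_le).2) hj]
    by_cases h1 : p.1 = 0 <;> by_cases h2 : p.2 = 0 <;> simp [h1, h2, Prod.ext_iff]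
  · rintro p ⟨hi, hj⟩
    exact chebCoeff_eq_sum_smul_powCoeff (fun k hk => (hb k hk).2) (fun l hl => (hb' l hl).2)
      heq hi hj
end
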